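/- For the scalar function φ(s, t) = t ln(t/s) + s - t defined for s > 0, t ≥ 0, the pointwise inequality (s - t)² ≤ 2 max(s, t) · φ(s, t) holds for all s > 0 and t ≥ 0. -/

import Mathlib

/-! Since `φ(s, t) = s · klFun (t / s)` with `klFun x = x log x + 1 - x`, scaling reduces the claim
to `(1 - x)² ≤ 2 max(1, x) klFun x` for `x ≥ 0`. For `x ≤ 1` this is `u ≤ sinh u` at
`u = -log x`; for `x ≥ 1` it is the truncation `z + z²/2 ≤ -log (1 - z)` of the logarithmic
series at `z = 1 - 1/x`. -/

open Real InformationTheory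

lemma log_le_half_sub_inv {y : ℝ} (hy : 1 ≤ y) : log y ≤ (y - y⁻¹) / 2 := by
  rw [← sinh_log (by positivity)]
  exact self_le_sinh_iff.mpr (log_nonneg hy)

lemma add_sq_div_two_le_neg_log_one_sub {z : ℝ} (h0 : 0 ≤ z) (h1 : z < 1) :
    z + z ^ 2 / 2 ≤ -log (1 - z) := by
  have hsum := hasSum_pow_div_log_of_abs_lt_one (abs_lt.mpr ⟨by linarith, h1⟩)
  have hpartial := sum_le_hasSum (Finset.range 2) (fun n _ => by positivity) hsum
  norm_num [Finset.sum_range_succ] at hpartial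
  linarith

lemma sq_one_sub_le_two_mul_klFun {x : ℝ} (h0 : 0 ≤ x) (h1 : x ≤ 1) :
    (1 - x) ^ 2 ≤ 2 * klFun x := by
  rcases h0.eq_or_lt with rfl | hpos
  · norm_num [klFun_zero]
  have hlog : log x⁻¹ ≤ (x⁻¹ - x⁻¹⁻¹) / 2 := log_le_half_sub_inv ((one_le_inv₀ hpos).mpr h1)
  rw [log_inv, inv_inv] at hlog
  have hmul : x * -log x ≤ (1 - x ^ 2) / 2 := by
    calc x * -log x ≤ x * ((x⁻¹ - x) / 2) := mul_le_mul_of_nonneg_left hlog h0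
      _ = (1 - x ^ 2) / 2 := by field_simp
  rw [klFun_apply]
  linarith

lemma sq_sub_one_le_two_mul_mul_klFun {x : ℝ} (hx : 1 ≤ x) :
    (x - 1) ^ 2 ≤ 2 * x * klFun x := by
  have hpos : 0 < x := by linarith
  have hlog := add_sq_div_two_le_neg_log_one_sub (z := 1 - x⁻¹)
    (sub_nonneg.mpr (inv_le_one_of_one_le₀ hx)) (by simpa using hpos)
  rw [sub_sub_cancel, log_inv, neg_neg] at hlog
  have hmul : 2 * x ^ 2 - 2 * x + (x - 1) ^ 2 ≤ 2 * x ^ 2 * log x := by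
    calc 2 * x ^ 2 - 2 * x + (x - 1) ^ 2 = 2 * x ^ 2 * ((1 - x⁻¹) + (1 - x⁻¹) ^ 2 / 2) := by
          field_simp
      _ ≤ 2 * x ^ 2 * log x := by gcongr
  rw [klFun_apply]
  linarith

lemma sq_one_sub_le_two_max_mul_klFun {x : ℝ} (hx : 0 ≤ x) :
    (1 - x) ^ 2 ≤ 2 * max 1 x * klFun x := by
  rcases le_total x 1 with h1 | h1
  · rw [max_eq_left h1, mul_one]
    exact sq_one_sub_le_two_mul_klFun hx h1
  · rw [max_eq_right h1, sub_sq_comm]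
    exact sq_sub_one_le_two_mul_mul_klFun h1

lemma mul_klFun_div {s : ℝ} (t : ℝ) (hs : s ≠ 0) :
    s * klFun (t / s) = t * log (t / s) + s - t := by
  rw [klFun_apply]
  field_simp

/-- Pointwise estimate for the Kullback–Leibler integrand
`φ(s,t) = t ln(t/s) + s - t`: for all `s > 0`, `t ≥ 0` one has
`(s - t)² ≤ 2 max(s,t) φ(s,t)` (with the convention `t ln(t/s) = 0` for `t = 0`,
which is Lean's `Real.log 0 = 0`). -/
theorem sq_le_two_max_mul_klIntegrand (s t : ℝ) (hs : 0 < s) (ht : 0 ≤ t) :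
    (s - t) ^ 2 ≤ 2 * max s t * (t * Real.log (t / s) + s - t) := by
  have hx : 0 ≤ t / s := div_nonneg ht hs.le
  have hmax : max s t = s * max 1 (t / s) := by
    rw [mul_max_of_nonneg _ _ hs.le, mul_one, mul_div_cancel₀ t hs.ne']
  calc (s - t) ^ 2 = s ^ 2 * (1 - t / s) ^ 2 := by field_simp
    _ ≤ s ^ 2 * (2 * max 1 (t / s) * klFun (t / s)) := by
        gcongr; exact sq_one_sub_le_two_max_mul_klFun hx
    _ = 2 * max s t * (s * klFun (t / s)) := by rw [hmax]; ring
    _ = 2 * max s t * (t * Real.log (t / s) + s - t) := by rw [mul_klFun_div t hs.ne']
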